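/- Let k be an odd positive integer. If f_N → f for some f ∈ (0,1) as N → ∞, then lim_{N→∞} N^{(k+1)/2} · Corr_N(k) = (f(f−1))^{(k−1)/2} · (2f−1) · ((k−1)/3) · (k+1)!/(2^{(k+1)/2} ((k+1)/2)!), i.e. the limit equals (f(f−1))^{(k−1)/2} (2f−1) (1/3)(k−1) E Z^{k+1}. -/

import Mathlib

/-!
Write `X_a = 1_{a ∈ r} - f_N` for the centred inclusion indicators. Simple random sampling is
exchangeable, so the sum of `∏_{a ∈ s} X_a` over samples depends only on `#s`, and
`∑_a X_a = 0` for every sample of size `n_N`. Multiplying `∏_{a < k} X_a` by this vanishing sum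
and reducing `X_a² = (1 - 2f_N) X_a + f_N (1 - f_N)` gives the exact recurrence
`(N - k) Corr_N(k+1) = -k ((1 - 2f_N) Corr_N(k) + f_N (1 - f_N) Corr_N(k-1))`.
By induction, `N^j Corr_N(2j) → (f(f-1))^j (2j-1)‼` and `N^(j+1) Corr_N(2j+1)` converges as well;
in the even steps the odd term of lower order is `o(N^-j)` and drops out.
-/

open Filter Finset
open scoped Pointwise Nat

section Exchangeability

variable {α : Type*} [Fintype α] [DecidableEq α]

noncomputable def centeredSampleSum (m : ℕ) (p : ℝ) (s : Finset α) : ℝ :=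
  ∑ r ∈ univ.powersetCard m, ∏ a ∈ s, ((if a ∈ r then 1 else 0) - p)

theorem centeredSampleSum_perm_smul (m : ℕ) (p : ℝ) (σ : Equiv.Perm α) (s : Finset α) :
    centeredSampleSum m p (σ • s) = centeredSampleSum m p s := by
  refine sum_nbij' (σ⁻¹ • ·) (σ • ·) ?_ ?_ (fun r _ ↦ smul_inv_smul σ r)
    (fun r _ ↦ inv_smul_smul σ r) fun r _ ↦ ?_
  · simp [card_smul_finset]
  · simp [card_smul_finset]
  · rw [smul_finset_def, prod_image fun a _ b _ h ↦ MulAction.injective σ h]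
    simp [mem_inv_smul_finset_iff]

theorem centeredSampleSum_eq_of_card_eq (m : ℕ) (p : ℝ) {s t : Finset α} (h : #s = #t) :
    centeredSampleSum m p s = centeredSampleSum m p t := by
  obtain ⟨σ, hσ⟩ := (Set.powersetCard.isPretransitive (α := α) (n := #t)).exists_smul_eq
    ⟨s, h⟩ ⟨t, rfl⟩
  rw [← centeredSampleSum_perm_smul m p σ s]
  exact congrArg (centeredSampleSum m p ·.1) hσ

theorem sum_centered_indicator_eq_zero {m : ℕ} {p : ℝ} (hp : Fintype.card α * p = m)
    {r : Finset α} (hr : #r = m) : ∑ a, ((if a ∈ r then 1 else 0) - p) = 0 := by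
  simp [sum_sub_distrib, hr, hp]

theorem centered_indicator_mul_self (P : Prop) [Decidable P] (p : ℝ) :
    ((if P then 1 else 0) - p) * ((if P then 1 else 0) - p)
      = (1 - 2 * p) * ((if P then 1 else 0) - p) + p * (1 - p) := by
  split_ifs <;> ring

theorem card_sub_mul_centeredSampleSum {m : ℕ} {p : ℝ} (hp : Fintype.card α * p = m)
    {s t u : Finset α} (ht : #t = #s + 1) (hu : #u = #s - 1) :
    (Fintype.card α - #s : ℝ) * centeredSampleSum m p t
      = -#s * ((1 - 2 * p) * centeredSampleSum m p s + p * (1 - p) * centeredSampleSum m p u) := by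
  set X : α → Finset α → ℝ := fun a r ↦ (if a ∈ r then 1 else 0) - p
  have hzero : ∑ a, ∑ r ∈ univ.powersetCard m, (∏ b ∈ s, X b r) * X a r = 0 := by
    rw [sum_comm]
    refine sum_eq_zero fun r hr ↦ ?_
    rw [← mul_sum, sum_centered_indicator_eq_zero hp (mem_powersetCard.1 hr).2, mul_zero]
  have hout : ∀ a ∉ s, ∑ r ∈ univ.powersetCard m, (∏ b ∈ s, X b r) * X a r
      = centeredSampleSum m p t := fun a ha ↦ by
    have hins (r : Finset α) : (∏ b ∈ s, X b r) * X a r = ∏ b ∈ insert a s, X b r := by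
      rw [prod_insert ha, mul_comm]
    simp_rw [hins]
    exact centeredSampleSum_eq_of_card_eq m p (by rw [card_insert_of_notMem ha, ht])
  have hin : ∀ a ∈ s, ∑ r ∈ univ.powersetCard m, (∏ b ∈ s, X b r) * X a r
      = (1 - 2 * p) * centeredSampleSum m p s + p * (1 - p) * centeredSampleSum m p u :=
      fun a ha ↦ by
    have hsq (r : Finset α) : (∏ b ∈ s, X b r) * X a r
        = (1 - 2 * p) * ∏ b ∈ s, X b r + p * (1 - p) * ∏ b ∈ s.erase a, X b r := by
      rw [← mul_prod_erase s _ ha]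
      linear_combination (∏ b ∈ s.erase a, X b r) *
        centered_indicator_mul_self (a ∈ r) p
    simp_rw [hsq, sum_add_distrib, ← mul_sum]
    rw [← centeredSampleSum_eq_of_card_eq m p (s := s.erase a) (t := u)
      (by rw [card_erase_of_mem ha, hu])]
    rfl
  rw [← sum_add_sum_compl s, sum_congr rfl hin,
    sum_congr rfl fun a ha ↦ hout a (mem_compl.1 ha), sum_const, sum_const, card_compl,
    nsmul_eq_mul, nsmul_eq_mul, Nat.cast_sub (card_le_univ s)] at hzero
  linear_combination hzero

end Exchangeability

theorem sum_powersetCard_range_eq_centeredSampleSum (N m k : ℕ) (p : ℝ) (hk : k ≤ N) :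
    ∑ r ∈ (range N).powersetCard m, ∏ A ∈ range k, ((if A ∈ r then 1 else 0) - p)
      = centeredSampleSum m p (univ.filter fun i : Fin N ↦ (i : ℕ) < k) := by
  have hrange (j : ℕ) (hj : j ≤ N) :
      range j = (univ.filter fun i : Fin N ↦ (i : ℕ) < j).map Fin.valEmbedding := by
    ext A
    simp only [mem_range, Finset.mem_map, mem_filter, mem_univ, true_and, Fin.valEmbedding_apply]
    exact ⟨fun h ↦ ⟨⟨A, by omega⟩, h, rfl⟩, by rintro ⟨i, hi, rfl⟩; exact hi⟩
  rw [hrange N le_rfl, hrange k hk, powersetCard_map, sum_map]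
  refine sum_congr (by ext; simp) fun r _ ↦ ?_
  simp only [prod_map, RelEmbedding.coe_toEmbedding, mapEmbedding_apply, Finset.mem_map']

theorem Fin.card_filter_val_lt_of_le {N k : ℕ} (hk : k ≤ N) :
    #(univ.filter fun i : Fin N ↦ (i : ℕ) < k) = k := by
  rw [Fin.card_filter_val_lt, min_eq_right hk]

noncomputable def corr (N m k : ℕ) : ℝ :=
  (N.choose m : ℝ)⁻¹ *
    ∑ r ∈ (range N).powersetCard m, ∏ A ∈ range k, ((if A ∈ r then (1 : ℝ) else 0) - m / N)

theorem corr_zero {N m : ℕ} (hm : m ≤ N) : corr N m 0 = 1 := by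
  simp [corr, (Nat.choose_pos hm).ne']

theorem corr_recurrence (N m k : ℕ) (hk : k < N) :
    (N - k : ℝ) * corr N m (k + 1)
      = -k * ((1 - 2 * (m / N)) * corr N m k + m / N * (1 - m / N) * corr N m (k - 1)) := by
  have hN : (N : ℝ) ≠ 0 := by exact_mod_cast (by omega : N ≠ 0)
  have h := card_sub_mul_centeredSampleSum (α := Fin N) (m := m) (p := m / N)
    (by rw [Fintype.card_fin, mul_div_cancel₀ _ hN]) (s := univ.filter fun i ↦ (i : ℕ) < k)
    (t := univ.filter fun i ↦ (i : ℕ) < k + 1) (u := univ.filter fun i ↦ (i : ℕ) < k - 1)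
    (by rw [Fin.card_filter_val_lt_of_le hk, Fin.card_filter_val_lt_of_le hk.le])
    (by rw [Fin.card_filter_val_lt_of_le (by omega), Fin.card_filter_val_lt_of_le hk.le])
  simp only [corr, sum_powersetCard_range_eq_centeredSampleSum N m k _ hk.le,
    sum_powersetCard_range_eq_centeredSampleSum N m (k + 1) _ hk,
    sum_powersetCard_range_eq_centeredSampleSum N m (k - 1) _ (by omega)]
  rw [Fintype.card_fin, Fin.card_filter_val_lt_of_le hk.le] at h
  linear_combination (N.choose m : ℝ)⁻¹ * h

-- At `j = 0` the truncated `2 * 0 - 1 = 0` gives `0‼ = 1`, the usual value of `(-1)‼`.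
noncomputable def evenCorrLimit (f : ℝ) (j : ℕ) : ℝ := (f * (f - 1)) ^ j * (2 * j - 1)‼

noncomputable def oddCorrLimit (f : ℝ) (j : ℕ) : ℝ :=
  (f * (f - 1)) ^ j * (2 * f - 1) * (2 * j / 3) * (2 * j + 1)‼

theorem evenCorrLimit_zero (f : ℝ) : evenCorrLimit f 0 = 1 := by
  simp [evenCorrLimit]

theorem oddCorrLimit_zero (f : ℝ) : oddCorrLimit f 0 = 0 := by
  simp [oddCorrLimit]

theorem evenCorrLimit_succ (f : ℝ) (j : ℕ) :
    evenCorrLimit f (j + 1) = (2 * j + 1) * (f * (f - 1)) * evenCorrLimit f j := by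
  rw [evenCorrLimit, evenCorrLimit, show 2 * (j + 1) - 1 = 2 * j + 1 by omega,
    Nat.doubleFactorial_add_one]
  push_cast
  ring

theorem oddCorrLimit_succ (f : ℝ) (j : ℕ) :
    oddCorrLimit f (j + 1) =
      -(2 * j + 2) * ((1 - 2 * f) * evenCorrLimit f (j + 1) + f * (1 - f) * oddCorrLimit f j) := by
  rw [oddCorrLimit, oddCorrLimit, evenCorrLimit, show 2 * (j + 1) + 1 = 2 * j + 1 + 2 by ring,
    Nat.doubleFactorial_add_two, show 2 * (j + 1) - 1 = 2 * j + 1 by omega]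
  push_cast
  ring

theorem tendsto_corr_succ {n : ℕ → ℕ} {f : ℝ}
    (hconv : Tendsto (fun N : ℕ ↦ (n N : ℝ) / N) atTop (nhds f)) {k e : ℕ} {L M : ℝ}
    (hL : Tendsto (fun N : ℕ ↦ (N : ℝ) ^ e * corr N (n N) k) atTop (nhds L))
    (hM : Tendsto (fun N : ℕ ↦ (N : ℝ) ^ e * corr N (n N) (k - 1)) atTop (nhds M)) :
    Tendsto (fun N : ℕ ↦ (N : ℝ) ^ (e + 1) * corr N (n N) (k + 1)) atTop
      (nhds (-k * ((1 - 2 * f) * L + f * (1 - f) * M))) := by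
  have hlim := ((tendsto_natCast_div_add_atTop (-k : ℝ)).mul_const (-k : ℝ)).mul
    ((((hconv.const_mul 2).const_sub 1).mul hL).add ((hconv.mul (hconv.const_sub 1)).mul hM))
  rw [one_mul] at hlim
  refine hlim.congr' ((eventually_gt_atTop k).mono fun N hN ↦ ?_)
  have hNk : (N : ℝ) + -k ≠ 0 := by
    rw [← sub_eq_add_neg, sub_ne_zero]; exact_mod_cast hN.ne'
  have hrec := corr_recurrence N (n N) k hN
  field_simp
  linear_combination (-(N : ℝ) ^ (e + 1)) * hrec

theorem tendsto_pow_mul_corr {n : ℕ → ℕ} (hn : ∀ N, n N ≤ N) {f : ℝ}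
    (hconv : Tendsto (fun N : ℕ ↦ (n N : ℝ) / N) atTop (nhds f)) (j : ℕ) :
    Tendsto (fun N : ℕ ↦ (N : ℝ) ^ j * corr N (n N) (2 * j)) atTop
        (nhds (evenCorrLimit f j)) ∧
      Tendsto (fun N : ℕ ↦ (N : ℝ) ^ (j + 1) * corr N (n N) (2 * j + 1)) atTop
        (nhds (oddCorrLimit f j)) := by
  induction j with
  | zero =>
    have heven : Tendsto (fun N : ℕ ↦ (N : ℝ) ^ 0 * corr N (n N) (2 * 0)) atTop (nhds 1) :=
      tendsto_const_nhds.congr fun N ↦ by simp [corr_zero (hn N)]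
    refine ⟨by rwa [evenCorrLimit_zero], ?_⟩
    -- For `k = 0` the factor `-k` kills the recurrence, so `Corr_N(1) = 0`.
    simpa [oddCorrLimit_zero, evenCorrLimit_zero] using
      tendsto_corr_succ hconv (k := 0) (e := 0) heven heven
  | succ j ih =>
    have hodd : Tendsto (fun N : ℕ ↦ (N : ℝ) ^ j * corr N (n N) (2 * j + 1)) atTop (nhds 0) := by
      refine (mul_zero (oddCorrLimit f j) ▸ ih.2.mul tendsto_inv_atTop_nhds_zero_nat).congr' ?_
      filter_upwards [eventually_ne_atTop 0] with N hN
      field_simp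
      ring
    have heven : Tendsto (fun N : ℕ ↦ (N : ℝ) ^ (j + 1) * corr N (n N) (2 * j + 1 + 1)) atTop
        (nhds (evenCorrLimit f (j + 1))) := by
      convert tendsto_corr_succ hconv hodd (by simpa using ih.1) using 2
      rw [evenCorrLimit_succ]
      push_cast
      ring
    refine ⟨heven, ?_⟩
    rw [show 2 * (j + 1) + 1 = 2 * j + 2 + 1 by ring]
    convert tendsto_corr_succ hconv (k := 2 * j + 2) heven (by simpa using ih.2) using 2
    rw [oddCorrLimit_succ]
    push_cast
    ring

theorem Nat.factorial_two_mul_add_two (j : ℕ) :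
    (2 * j + 2)! = 2 ^ (j + 1) * (j + 1)! * (2 * j + 1)‼ := by
  rw [factorial_eq_mul_doubleFactorial, show 2 * j + 1 + 1 = 2 * (j + 1) by ring,
    doubleFactorial_two_mul]

theorem corr_limit_odd_general (n : ℕ → ℕ) (hn : ∀ N, n N ≤ N) (f : ℝ)
    (hconv : Tendsto (fun N : ℕ => (n N : ℝ) / N) atTop (nhds f))
    (k : ℕ) (hk : Odd k) :
    Tendsto
      (fun N : ℕ => (N : ℝ) ^ ((k + 1) / 2) *
        ((Nat.choose N (n N) : ℝ)⁻¹ *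
          ∑ r ∈ (Finset.range N).powersetCard (n N),
            ∏ A ∈ Finset.range k, ((if A ∈ r then (1 : ℝ) else 0) - (n N : ℝ) / N)))
      atTop
      (nhds ((f * (f - 1)) ^ ((k - 1) / 2) * (2 * f - 1) * (((k : ℝ) - 1) / 3) *
        ((Nat.factorial (k + 1) : ℝ) /
          (2 ^ ((k + 1) / 2) * (Nat.factorial ((k + 1) / 2) : ℝ))))) := by
  obtain ⟨j, rfl⟩ := hk
  have hlimit : (f * (f - 1)) ^ j * (2 * f - 1) * ((((2 * j + 1 : ℕ) : ℝ) - 1) / 3) *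
      ((Nat.factorial (2 * j + 1 + 1) : ℝ) / (2 ^ (j + 1) * (Nat.factorial (j + 1) : ℝ)))
        = oddCorrLimit f j := by
    rw [Nat.factorial_two_mul_add_two, oddCorrLimit]
    field_simp
    push_cast
    ring
  rw [show (2 * j + 1 + 1) / 2 = j + 1 by omega, show (2 * j + 1 - 1) / 2 = j by omega, hlimit]
  exact (tendsto_pow_mul_corr hn hconv j).2

/-- Let `k` be an odd positive integer.  If the sampling fractions
`f_N = n_N/N` converge to some `f ∈ (0,1)` as `N → ∞`, then
`lim_{N→∞} N^{(k+1)/2} · Corr_N(k)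
  = (f(f−1))^{(k−1)/2} · (2f−1) · ((k−1)/3) · (k+1)!/(2^{(k+1)/2} ((k+1)/2)!)`,
i.e. the limit equals `(f(f−1))^{(k−1)/2} (2f−1) (1/3)(k−1) E Z^{k+1}` for a standard
normal `Z`.  Here
`Corr_N(k) = C(N,n_N)⁻¹ · Σ_{r ⊆ {1,…,N}, |r|=n_N} ∏_{A=1}^{k} (1_{A∈r} − f_N)`,
with the population `{1,…,N}` modelled as `Finset.range N` and the first `k`
individuals as `Finset.range k`. -/
theorem corr_limit_odd (n : ℕ → ℕ) (hn : ∀ N, n N ≤ N) (f : ℝ)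
    (hf : f ∈ Set.Ioo (0 : ℝ) 1)
    (hconv : Tendsto (fun N : ℕ => (n N : ℝ) / N) atTop (nhds f))
    (k : ℕ) (hk : Odd k) (hk0 : 0 < k) :
    Tendsto
      (fun N : ℕ => (N : ℝ) ^ ((k + 1) / 2) *
        ((Nat.choose N (n N) : ℝ)⁻¹ *
          ∑ r ∈ (Finset.range N).powersetCard (n N),
            ∏ A ∈ Finset.range k, ((if A ∈ r then (1 : ℝ) else 0) - (n N : ℝ) / N)))
      atTop
      (nhds ((f * (f - 1)) ^ ((k - 1) / 2) * (2 * f - 1) * (((k : ℝ) - 1) / 3) *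
        ((Nat.factorial (k + 1) : ℝ) /
          (2 ^ ((k + 1) / 2) * (Nat.factorial ((k + 1) / 2) : ℝ))))) :=
  corr_limit_odd_general n hn f hconv k hk
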